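/- arXiv:2110.05670 — 5 statements merged into one kernel-verified Lean document; each statement's English description precedes it below -/
import Mathlib

section
/- If a graph $G$ contains no theta-graph (a subgraph consisting of three internally vertex-disjoint paths sharing the same two endpoints), then every block of $G$ is an isolated vertex, a single edge ($K_2$), or a cycle. -/
open SimpleGraph

attribute [local instance] Classical.propDecidable

/-- `G` contains a theta-subgraph: two vertices joined by three pairwise
internally vertex-disjoint paths. -/
def HasTheta {V : Type*} (G : SimpleGraph V) : Prop :=
  ∃ (a b : V) (p q r : G.Walk a b), a ≠ b ∧
    p.IsPath ∧ q.IsPath ∧ r.IsPath ∧ p ≠ q ∧ q ≠ r ∧ p ≠ r ∧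
    List.Disjoint p.support.tail.dropLast q.support.tail.dropLast ∧
    List.Disjoint q.support.tail.dropLast r.support.tail.dropLast ∧
    List.Disjoint p.support.tail.dropLast r.support.tail.dropLast

/-- `B` induces a connected subgraph of `G` with no cut-vertex. -/
def NoCutConn {V : Type*} (G : SimpleGraph V) (B : Set V) : Prop :=
  (G.induce B).Connected ∧ ∀ v ∈ B, (G.induce (B \ {v})).Preconnected

/-- `B` is a block of `G`: a maximal set inducing a connected subgraph
without cut-vertices. -/
def IsBlock {V : Type*} (G : SimpleGraph V) (B : Set V) : Prop :=
  NoCutConn G B ∧ ∀ B' : Set V, B ⊆ B' → NoCutConn G B' → B = B'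


/-!
If a vertex `v` of a block `B` with at least three vertices had three neighbours `x, y, z` in
`B`, then, `B - v` being connected, a path `P` from `x` to `y` and a path from `z` to the first
vertex `w` of `P` it meets split into three paths ending at `w` with disjoint interiors; together
with the edges `vx, vy, vz` they form a theta between `v` and `w`. Conversely `B - u` is connected
for every `u`, so every vertex of `B` has a neighbour besides any given one, hence degree at least
two.
-/

namespace SimpleGraph

variable {V : Type*} {G : SimpleGraph V}

namespace Walk

lemma exists_prefix_to_first_mem {a b : V} (p : G.Walk a b) {S : Set V} (hb : b ∈ S) :
    ∃ w ∈ S, ∃ q : G.Walk a w, q.support ⊆ p.support ∧ (∀ x ∈ q.support.dropLast, x ∉ S) ∧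
      (p.IsPath → q.IsPath) := by
  induction p with
  | nil => exact ⟨_, hb, nil, by simp, by simp, id⟩
  | @cons u _ _ h p ih =>
    by_cases hu : u ∈ S
    · exact ⟨u, hu, nil, by simp, by simp, fun _ => IsPath.nil⟩
    obtain ⟨w, hw, q, hsub, hout, hpath⟩ := ih hb
    refine ⟨w, hw, cons h q, ?_, ?_, ?_⟩
    · simpa only [support_cons] using List.cons_subset_cons u hsub
    · rw [support_cons, List.dropLast_cons_of_ne_nil q.support_ne_nil]
      rintro x (_ | ⟨_, hx⟩)
      exacts [hu, hout x hx]
    · simp only [cons_isPath_iff]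
      exact fun hp => ⟨hpath hp.1, fun hc => hp.2 (hsub hc)⟩

lemma exists_three_paths_to_common_vertex {x y z : V} (P : G.Walk x y) (hP : P.IsPath)
    (Q : G.Walk z x) :
    ∃ w, ∃ (p : G.Walk x w) (q : G.Walk y w) (r : G.Walk z w),
      p.IsPath ∧ q.IsPath ∧ r.IsPath ∧
      p.support ⊆ P.support ∧ q.support ⊆ P.support ∧ r.support ⊆ Q.support ∧
      p.support.dropLast.Disjoint q.support.dropLast ∧
      q.support.dropLast.Disjoint r.support.dropLast ∧
      p.support.dropLast.Disjoint r.support.dropLast := by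
  obtain ⟨w, hwP, r, hrQ, hrP, hr⟩ :=
    Q.bypass.exists_prefix_to_first_mem (S := {a | a ∈ P.support}) P.start_mem_support
  have hsplit : P.support = (P.takeUntil w hwP).support ++ (P.dropUntil w hwP).support.tail := by
    conv_lhs => rw [← P.take_spec hwP]
    exact support_append _ _
  have hpq : (P.takeUntil w hwP).support.Disjoint (P.dropUntil w hwP).support.tail :=
    (List.nodup_append'.mp (hsplit ▸ hP.support_nodup)).2.2
  refine ⟨w, P.takeUntil w hwP, (P.dropUntil w hwP).reverse, r, hP.takeUntil hwP,
    (hP.dropUntil hwP).reverse, hr Q.bypass_isPath, P.support_takeUntil_subset_support hwP, ?_,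
    List.Subset.trans hrQ Q.support_bypass_subset_support, ?_, ?_, ?_⟩
  · simpa only [support_reverse, List.reverse_subset] using P.support_dropUntil_subset_support hwP
  · simp only [support_reverse, List.dropLast_reverse, List.disjoint_reverse_right]
    exact fun a ha hb => hpq ((List.dropLast_sublist _).subset ha) hb
  · simp only [support_reverse, List.dropLast_reverse, List.disjoint_reverse_left]
    exact fun a ha hra =>
      hrP a hra (P.support_dropUntil_subset_support hwP (List.mem_of_mem_tail ha))
  · exact fun a ha hra =>
      hrP a hra (P.support_takeUntil_subset_support hwP ((List.dropLast_sublist _).subset ha))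

end Walk

lemma exists_isPath_of_preconnected_induce {S : Set V} (hS : (G.induce S).Preconnected)
    {x y : V} (hx : x ∈ S) (hy : y ∈ S) : ∃ p : G.Walk x y, p.IsPath ∧ ∀ a ∈ p.support, a ∈ S := by
  obtain ⟨W⟩ := hS ⟨x, hx⟩ ⟨y, hy⟩
  refine ⟨(W.map (Embedding.induce S).toHom).bypass, Walk.bypass_isPath _, fun a ha => ?_⟩
  obtain ⟨b, -, rfl⟩ :=
    List.mem_map.mp (Walk.support_map _ W ▸ Walk.support_bypass_subset_support _ ha)
  exact b.2

lemma exists_adj_of_preconnected_induce {S : Set V} (hS : (G.induce S).Preconnected)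
    {v t : V} (hv : v ∈ S) (ht : t ∈ S) (htv : t ≠ v) : ∃ s ∈ S, G.Adj v s := by
  obtain ⟨W⟩ := hS ⟨v, hv⟩ ⟨t, ht⟩
  exact ⟨W.snd, W.snd.2, W.adj_snd (W.not_nil_of_ne (by simpa using htv.symm))⟩

end SimpleGraph

section Theta

variable {V : Type*} {G : SimpleGraph V}

lemma hasTheta_of_three_adj_of_paths {v w x y z : V}
    (hx : G.Adj v x) (hy : G.Adj v y) (hz : G.Adj v z)
    (hxy : x ≠ y) (hyz : y ≠ z) (hxz : x ≠ z)
    {p : G.Walk x w} {q : G.Walk y w} {r : G.Walk z w} (hp : p.IsPath) (hq : q.IsPath)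
    (hr : r.IsPath) (hvp : v ∉ p.support) (hvq : v ∉ q.support) (hvr : v ∉ r.support)
    (hpq : p.support.dropLast.Disjoint q.support.dropLast)
    (hqr : q.support.dropLast.Disjoint r.support.dropLast)
    (hpr : p.support.dropLast.Disjoint r.support.dropLast) : HasTheta G := by
  refine ⟨v, w, .cons hx p, .cons hy q, .cons hz r, fun h => hvp (h ▸ p.end_mem_support),
    Walk.cons_isPath_iff _ _ |>.mpr ⟨hp, hvp⟩, Walk.cons_isPath_iff _ _ |>.mpr ⟨hq, hvq⟩,
    Walk.cons_isPath_iff _ _ |>.mpr ⟨hr, hvr⟩, ?_, ?_, ?_, ?_, ?_, ?_⟩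
  · exact fun h => hxy (by simpa using congrArg Walk.snd h)
  · exact fun h => hyz (by simpa using congrArg Walk.snd h)
  · exact fun h => hxz (by simpa using congrArg Walk.snd h)
  all_goals simpa only [Walk.support_cons, List.tail_cons]

lemma hasTheta_of_three_adj_of_preconnected_induce {S : Set V} (hS : (G.induce S).Preconnected)
    {v x y z : V} (hv : v ∉ S) (hx : x ∈ S) (hy : y ∈ S) (hz : z ∈ S)
    (hxy : x ≠ y) (hyz : y ≠ z) (hxz : x ≠ z)
    (hvx : G.Adj v x) (hvy : G.Adj v y) (hvz : G.Adj v z) : HasTheta G := by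
  obtain ⟨P, hP, hPS⟩ := exists_isPath_of_preconnected_induce hS hx hy
  obtain ⟨Q, -, hQS⟩ := exists_isPath_of_preconnected_induce hS hz hx
  obtain ⟨w, p, q, r, hp, hq, hr, hpP, hqP, hrQ, hpq, hqr, hpr⟩ :=
    P.exists_three_paths_to_common_vertex hP Q
  exact hasTheta_of_three_adj_of_paths hvx hvy hvz hxy hyz hxz hp hq hr
    (fun h => hv (hPS _ (hpP h))) (fun h => hv (hPS _ (hqP h)))
    (fun h => hv (hQS _ (hrQ h))) hpq hqr hpr

end Theta

section Block

variable {V : Type*} {G : SimpleGraph V} {B : Set V}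

lemma degree_induce_le_two (hθ : ¬ HasTheta G)
    (hcut : ∀ v ∈ B, (G.induce (B \ {v})).Preconnected)
    (v : B) [Fintype ((G.induce B).neighborSet v)] : (G.induce B).degree v ≤ 2 := by
  by_contra! h
  rw [← card_neighborFinset_eq_degree] at h
  obtain ⟨x, hx, y, hy, z, hz, hxy, hxz, hyz⟩ := Finset.two_lt_card.mp h
  rw [mem_neighborFinset] at hx hy hz
  exact hθ <| hasTheta_of_three_adj_of_preconnected_induce (hcut v v.2) (by simp)
    ⟨x.2, (hx.ne' <| Subtype.ext ·)⟩ ⟨y.2, (hy.ne' <| Subtype.ext ·)⟩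
    ⟨z.2, (hz.ne' <| Subtype.ext ·)⟩ (Subtype.coe_injective.ne hxy)
    (Subtype.coe_injective.ne hyz) (Subtype.coe_injective.ne hxz) hx hy hz

lemma exists_adj_ne_of_forall_preconnected_induce_sdiff
    (hcut : ∀ v ∈ B, (G.induce (B \ {v})).Preconnected) (h3 : 3 ≤ B.ncard)
    {u v : V} (hu : u ∈ B) (hv : v ∈ B) (huv : u ≠ v) : ∃ s ∈ B, G.Adj v s ∧ s ≠ u := by
  obtain ⟨t, ht, htvu⟩ := Set.exists_mem_notMem_of_ncard_lt_ncard (s := {v, u}) (t := B)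
    (by rw [Set.ncard_pair huv.symm]; omega)
  simp only [Set.mem_insert_iff, Set.mem_singleton_iff, not_or] at htvu
  obtain ⟨s, hs, hvs⟩ :=
    exists_adj_of_preconnected_induce (hcut u hu) ⟨hv, huv.symm⟩ ⟨ht, htvu.2⟩ htvu.1
  exact ⟨s, hs.1, hvs, hs.2⟩

lemma two_le_degree_induce (hcut : ∀ v ∈ B, (G.induce (B \ {v})).Preconnected)
    (h3 : 3 ≤ B.ncard) (v : B) [Fintype ((G.induce B).neighborSet v)] :
    2 ≤ (G.induce B).degree v := by
  obtain ⟨u, hu, huv⟩ := Set.exists_mem_notMem_of_ncard_lt_ncard (s := {v.1}) (t := B)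
    (by rw [Set.ncard_singleton]; omega)
  obtain ⟨s₁, hs₁, hvs₁, -⟩ :=
    exists_adj_ne_of_forall_preconnected_induce_sdiff hcut h3 hu v.2 huv
  obtain ⟨s₂, hs₂, hvs₂, hs₂₁⟩ :=
    exists_adj_ne_of_forall_preconnected_induce_sdiff hcut h3 hs₁ v.2 hvs₁.ne'
  rw [← card_neighborFinset_eq_degree]
  exact Finset.one_lt_card.mpr ⟨⟨s₁, hs₁⟩, (mem_neighborFinset _ _ _).mpr hvs₁,
    ⟨s₂, hs₂⟩, (mem_neighborFinset _ _ _).mpr hvs₂, fun h => hs₂₁ (congrArg Subtype.val h).symm⟩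

lemma eq_singleton_or_adj_pair_of_ncard_lt_three (hB : (G.induce B).Connected)
    (hfin : B.Finite) (hlt : B.ncard < 3) :
    (∃ v, B = {v}) ∨ ∃ u v, u ≠ v ∧ G.Adj u v ∧ B = {u, v} := by
  have hpos : 0 < B.ncard := (Set.ncard_pos hfin).mpr (Set.nonempty_coe_sort.mp hB.nonempty)
  obtain h | h : B.ncard = 1 ∨ B.ncard = 2 := by omega
  · exact Or.inl (Set.ncard_eq_one.mp h)
  obtain ⟨a, b, hab, rfl⟩ := Set.ncard_eq_two.mp h
  obtain ⟨s, hs, has⟩ :=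
    exists_adj_of_preconnected_induce hB.preconnected (by simp) (by simp : b ∈ ({a, b} : Set V))
      hab.symm
  obtain rfl | rfl := hs
  · exact (has.ne rfl).elim
  · exact Or.inr ⟨a, s, hab, has, rfl⟩

end Block

/-- If `G` contains no theta-graph, then each block of `G` is an isolated
vertex, a single edge, or a cycle. -/
theorem blocks_of_theta_free {V : Type*} [Fintype V] (G : SimpleGraph V)
    (hθ : ¬ HasTheta G) (B : Set V) (hB : IsBlock G B) :
    (∃ v, B = {v}) ∨
    (∃ u v, u ≠ v ∧ G.Adj u v ∧ B = {u, v}) ∨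
    ((G.induce B).Connected ∧ 3 ≤ B.ncard ∧ ∀ v : B, (G.induce B).degree v = 2) := by
  obtain ⟨⟨hconn, hcut⟩, -⟩ := hB
  rcases lt_or_ge B.ncard 3 with hlt | h3
  · exact (eq_singleton_or_adj_pair_of_ncard_lt_three hconn (Set.toFinite B) hlt).imp_right Or.inl
  · exact Or.inr <| Or.inr ⟨hconn, h3, fun v =>
      (degree_induce_le_two hθ hcut v).antisymm (two_le_degree_induce hcut h3 v)⟩
end

section
/- Let $G$ be a graph on $n$ vertices with no Hamilton cycle. Then $e(G) \leq \binom{n-1}{2} + 1$. -/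
/-!
If `e(G) ≥ (n-1 choose 2) + 2`, the complement of `G` has at most `n - 3` edges. Two distinct
vertices `u`, `v` are together incident to at least `(n-1-d(u)) + (n-1-d(v)) - 1` of them, so
`d(u) + d(v) ≥ n` for all `u ≠ v`, and also `n ≥ 3`. Ore's theorem then gives a Hamilton cycle.

Ore's theorem is proved by adding missing edges: the complete graph is Hamiltonian, and if
`G + uv` has a Hamilton cycle while `d(u) + d(v) ≥ n` in `G`, then either the cycle avoids `uv`
or removing `uv` leaves a Hamilton path `u = x₀, …, xₘ = v` of `G`. Among the `m = n - 1`
indices `i < m`, `d(u)` satisfy `u ~ xᵢ₊₁` and `d(v)` satisfy `v ~ xᵢ`, so some `i` satisfies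
both, and `u, x₁, …, xᵢ, v, xₘ₋₁, …, xᵢ₊₁, u` is a Hamilton cycle of `G`.
-/

lemma Nat.choose_two_sub_one_add_sub_one (n : ℕ) : (n - 1).choose 2 + (n - 1) = n.choose 2 := by
  cases n with
  | zero => rfl
  | succ n => rw [Nat.add_sub_cancel, Nat.choose_succ_succ', Nat.choose_one_right, add_comm]

namespace SimpleGraph

open Finset

variable {V : Type*} {G : SimpleGraph V}

namespace Walk

lemma IsCycle.eq_snd_or_eq_penultimate_of_mem_edges {u v : V} {c : G.Walk u u} (hc : c.IsCycle)
    (he : s(u, v) ∈ c.edges) : v = c.snd ∨ v = c.penultimate := by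
  have htail : ¬c.tail.Nil := by
    rw [← length_eq_zero_iff, length_tail]
    have := hc.three_le_length
    omega
  rw [← cons_tail_eq c hc.not_nil, edges_cons, List.mem_cons] at he
  rcases he with he | he
  · exact .inl (Sym2.congr_right.1 he)
  · right
    rw [hc.isPath_tail.eq_penultimate_of_mem_edges he,
      ← penultimate_cons_of_not_nil (c.adj_snd hc.not_nil) _ htail, cons_tail_eq c hc.not_nil]

variable [DecidableEq V]

lemma IsHamiltonian.reverse {u v : V} {p : G.Walk u v} (hp : p.IsHamiltonian) :
    p.reverse.IsHamiltonian := fun w => by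
  rw [support_reverse, List.count_reverse]
  exact hp w

lemma IsHamiltonian.of_support_perm {u v u' v' : V} {p : G.Walk u v} {q : G.Walk u' v'}
    (hp : p.IsHamiltonian) (hpq : q.support.Perm p.support) : q.IsHamiltonian := fun w => by
  rw [hpq.count_eq]
  exact hp w

lemma IsHamiltonian.transfer {H : SimpleGraph V} {u v : V} {p : G.Walk u v}
    (hp : p.IsHamiltonian) (hpH : ∀ e ∈ p.edges, e ∈ H.edgeSet) :
    (p.transfer H hpH).IsHamiltonian :=
  fun w => by rw [support_transfer]; exact hp w

lemma IsHamiltonian.reroute {u v : V} {p : G.Walk u v} (hp : p.IsHamiltonian) {i : ℕ}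
    (hi : i < p.length) (h : G.Adj (p.getVert i) v) :
    ((p.take i).append (cons h (p.drop (i + 1)).reverse)).IsHamiltonian := by
  refine hp.of_support_perm ?_
  rw [support_append, support_cons, List.tail_cons, support_reverse, support_take,
    drop_support_eq_support_drop_min, min_eq_left hi]
  exact ((List.reverse_perm _).append_left _).trans (.of_eq (List.take_append_drop _ _))

variable [Fintype V]

lemma IsHamiltonianCycle.reverse {u : V} {c : G.Walk u u} (hc : c.IsHamiltonianCycle) :
    c.reverse.IsHamiltonianCycle :=
  isHamiltonianCycle_iff_isCycle_and_length_eq.2 ⟨hc.isCycle.reverse, by simp [hc.length_eq]⟩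

lemma IsHamiltonianCycle.transfer {H : SimpleGraph V} {u : V} {c : G.Walk u u}
    (hc : c.IsHamiltonianCycle) (hcH : ∀ e ∈ c.edges, e ∈ H.edgeSet) :
    (c.transfer H hcH).IsHamiltonianCycle :=
  isHamiltonianCycle_iff_isCycle_and_length_eq.2
    ⟨hc.isCycle.transfer hcH, by rw [length_transfer, hc.length_eq]⟩

lemma IsHamiltonianCycle.exists_isHamiltonian_of_mem_edges {u v : V} {c : G.Walk u u}
    (hc : c.IsHamiltonianCycle) (he : s(u, v) ∈ c.edges) : ∃ p : G.Walk u v, p.IsHamiltonian := by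
  rcases hc.isCycle.eq_snd_or_eq_penultimate_of_mem_edges he with rfl | rfl
  · exact ⟨c.tail.reverse, hc.isHamiltonian_tail.reverse⟩
  · rw [← snd_reverse]
    exact ⟨c.reverse.tail.reverse, hc.reverse.isHamiltonian_tail.reverse⟩

lemma IsHamiltonian.isHamiltonianCycle_cons {u v : V} {p : G.Walk v u} (hp : p.IsHamiltonian)
    (h : G.Adj u v) (hV : 3 ≤ Fintype.card V) : (cons h p).IsHamiltonianCycle := by
  refine ⟨(cons_isCycle_iff p h).2 ⟨hp.isPath, fun he => ?_⟩, by simpa [IsHamiltonian] using hp⟩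
  have := hp.isPath.length_eq_one_of_mem_edges (Sym2.eq_swap ▸ he)
  have := hp.length_eq
  omega

variable [DecidableRel G.Adj]

lemma IsHamiltonian.card_filter_adj_getVert {u v : V} {p : G.Walk u v} (hp : p.IsHamiltonian)
    (w : V) : #{k ∈ range (p.length + 1) | G.Adj w (p.getVert k)} = G.degree w := by
  rw [← card_neighborFinset_eq_degree]
  refine card_nbij p.getVert (fun k hk => by simpa using (mem_filter.1 hk).2) ?_ ?_
  · intro k hk l hl hkl
    simp only [coe_filter, mem_range, Set.mem_ofPred_eq] at hk hl
    exact hp.isPath.getVert_injOn (Nat.le_of_lt_succ hk.1) (Nat.le_of_lt_succ hl.1) hkl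
  · intro x hx
    obtain ⟨k, rfl, hk⟩ := mem_support_iff_exists_getVert.1 (hp.mem_support x)
    exact ⟨k, by simpa [Nat.lt_succ_iff, hk] using hx, rfl⟩

lemma IsHamiltonian.exists_crossing {u v : V} {p : G.Walk u v} (hp : p.IsHamiltonian)
    (hdeg : Fintype.card V ≤ G.degree u + G.degree v) :
    ∃ i < p.length, G.Adj (p.getVert i) v ∧ G.Adj (p.getVert (i + 1)) u := by
  have hu := hp.card_filter_adj_getVert u
  have hv := hp.card_filter_adj_getVert v
  rw [card_filter, sum_range_succ'] at hu
  rw [card_filter, sum_range_succ] at hv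
  simp only [getVert_zero, getVert_length, SimpleGraph.irrefl, if_false, add_zero] at hu hv
  by_contra! h
  have : ∑ i ∈ range p.length, ((if G.Adj u (p.getVert (i + 1)) then 1 else 0) +
      (if G.Adj v (p.getVert i) then 1 else 0)) ≤ ∑ i ∈ range p.length, 1 := by
    refine sum_le_sum fun i hi => ?_
    have := h i (mem_range.1 hi)
    split_ifs <;> simp_all [G.adj_comm]
  rw [sum_add_distrib, hu, hv, sum_const, card_range, smul_eq_mul, mul_one] at this
  have := hp.length_eq
  have := Fintype.card_pos_iff.2 ⟨u⟩
  omega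

lemma IsHamiltonian.isHamiltonian_of_card_le_degree_add_degree {u v : V} {p : G.Walk u v}
    (hp : p.IsHamiltonian) (hV : 3 ≤ Fintype.card V)
    (hdeg : Fintype.card V ≤ G.degree u + G.degree v) : G.IsHamiltonian := by
  obtain ⟨i, hi, hv, hu⟩ := hp.exists_crossing hdeg
  exact fun _ => ⟨_, _, (hp.reroute hi hv).isHamiltonianCycle_cons hu hV⟩

end Walk

variable [Fintype V] [DecidableEq V]

lemma IsHamiltonian.of_sup_edge [DecidableRel G.Adj] {u v : V}
    (hG : (G ⊔ edge u v).IsHamiltonian) (hV : 3 ≤ Fintype.card V)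
    (hdeg : Fintype.card V ≤ G.degree u + G.degree v) : G.IsHamiltonian := by
  have : Nontrivial V := Fintype.one_lt_card_iff_nontrivial.1 (by omega)
  obtain ⟨c, hc⟩ := hG.exists_isHamiltonianCycle u
  have mem_edgeSet : ∀ e ∈ (G ⊔ edge u v).edgeSet, e ≠ s(u, v) → e ∈ G.edgeSet := by
    intro e he hne
    rw [edgeSet_sup] at he
    exact he.resolve_right fun he' => hne (edgeSet_edge_subset he')
  by_cases he : s(u, v) ∈ c.edges
  · obtain ⟨p, hp⟩ := hc.exists_isHamiltonian_of_mem_edges he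
    have hpG : ∀ e ∈ p.edges, e ∈ G.edgeSet := by
      refine fun e he' => mem_edgeSet e (p.edges_subset_edgeSet he') ?_
      rintro rfl
      have := hp.isPath.length_eq_one_of_mem_edges he'
      have := hp.length_eq
      omega
    exact (hp.transfer hpG).isHamiltonian_of_card_le_degree_add_degree hV hdeg
  · exact fun _ => ⟨u, c.transfer G _, hc.transfer fun e he' =>
      mem_edgeSet e (c.edges_subset_edgeSet he') (ne_of_mem_of_not_mem he' he)⟩

lemma isHamiltonian_top (hV : 3 ≤ Fintype.card V) : (⊤ : SimpleGraph V).IsHamiltonian := by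
  have hne : (univ : Finset V).toList ≠ [] := by
    rw [Ne, toList_eq_nil, ← Ne, ← nonempty_iff_ne_empty, univ_nonempty_iff,
      ← Fintype.card_pos_iff]
    omega
  let p := Walk.ofSupport (G := ⊤) _ hne (nodup_toList univ).isChain
  have hp : p.IsHamiltonian := fun w => by
    rw [Walk.support_ofSupport]
    exact List.count_eq_one_of_mem (nodup_toList univ) (mem_toList.2 (mem_univ w))
  refine hp.isHamiltonian_of_card_le_degree_add_degree hV ?_
  simp only [complete_graph_degree]
  omega

theorem isHamiltonian_of_card_le_degree_add_degree [DecidableRel G.Adj]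
    (hV : 3 ≤ Fintype.card V)
    (hG : ∀ u v, u ≠ v → ¬G.Adj u v → Fintype.card V ≤ G.degree u + G.degree v) :
    G.IsHamiltonian := by
  classical
  suffices ∀ H, G ≤ H → H.IsHamiltonian from this G le_rfl
  intro H
  induction H using WellFoundedGT.induction with
  | _ H ih =>
    intro hGH
    have hdeg : ∀ u v, u ≠ v → ¬H.Adj u v → Fintype.card V ≤ H.degree u + H.degree v :=
      fun u v huv hnadj => (hG u v huv fun h => hnadj (hGH h)).trans
        (add_le_add (degree_le_of_le hGH) (degree_le_of_le hGH))
    by_cases hcomplete : ∀ u v, u ≠ v → H.Adj u v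
    · obtain rfl : H = ⊤ := by
        ext u v
        exact ⟨Adj.ne, hcomplete u v⟩
      exact isHamiltonian_top hV
    push Not at hcomplete
    obtain ⟨u, v, huv, hnadj⟩ := hcomplete
    exact (ih _ (lt_sup_edge _ _ _ huv hnadj) (hGH.trans le_sup_left)).of_sup_edge hV
      (hdeg u v huv hnadj)

section EdgeCount

variable (G) [DecidableRel G.Adj]

lemma degree_add_degree_le_card_edgeFinset_add_one {u v : V} (huv : u ≠ v) :
    G.degree u + G.degree v ≤ #G.edgeFinset + 1 := by
  have hsub : G.incidenceFinset u ∪ G.incidenceFinset v ⊆ G.edgeFinset :=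
    union_subset (G.incidenceFinset_subset u) (G.incidenceFinset_subset v)
  have hinter : G.incidenceFinset u ∩ G.incidenceFinset v ⊆ {s(u, v)} := fun e he => by
    rw [mem_inter, mem_incidenceFinset, mem_incidenceFinset] at he
    exact mem_singleton.2 ((Sym2.mem_and_mem_iff huv).1 ⟨he.1.2, he.2.2⟩)
  rw [← card_incidenceFinset_eq_degree, ← card_incidenceFinset_eq_degree,
    ← card_union_add_card_inter]
  exact add_le_add (card_le_card hsub) ((card_le_card hinter).trans_eq (card_singleton _))

lemma card_edgeFinset_add_card_edgeFinset_compl :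
    #G.edgeFinset + #Gᶜ.edgeFinset = (Fintype.card V).choose 2 := by
  rw [← card_edgeFinset_top_eq_card_choose_two, ← card_union_of_disjoint
    (disjoint_edgeFinset.2 disjoint_compl_right), ← edgeFinset_sup]
  exact congrArg card (edgeFinset_inj.2 sup_compl_eq_top)

lemma card_le_degree_add_degree_of_card_edgeFinset {u v : V}
    (hG : (Fintype.card V - 1).choose 2 + 2 ≤ #G.edgeFinset) (huv : u ≠ v) :
    Fintype.card V ≤ G.degree u + G.degree v := by
  have hcompl := Gᶜ.degree_add_degree_le_card_edgeFinset_add_one huv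
  rw [degree_compl, degree_compl] at hcompl
  have htotal := G.card_edgeFinset_add_card_edgeFinset_compl
  have := Nat.choose_two_sub_one_add_sub_one (Fintype.card V)
  have := G.degree_lt_card_verts u
  have := G.degree_lt_card_verts v
  omega

end EdgeCount

end SimpleGraph

open SimpleGraph

attribute [local instance] Classical.propDecidable

/-- Ore's theorem: a graph on `n` vertices with no Hamilton cycle has at most
`(n-1 choose 2) + 1` edges. -/
theorem ore_edge_bound {V : Type*} [Fintype V] (G : SimpleGraph V)
    (h : ¬ ∃ (v : V) (c : G.Walk v v), c.IsHamiltonianCycle) :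
    G.edgeFinset.card ≤ (Fintype.card V - 1).choose 2 + 1 := by
  by_contra! hG
  have hV : 3 ≤ Fintype.card V := by
    have := G.card_edgeFinset_le_card_choose_two
    have := Nat.choose_two_sub_one_add_sub_one (Fintype.card V)
    omega
  exact h (isHamiltonian_of_card_le_degree_add_degree hV
    (fun _ _ huv _ => G.card_le_degree_add_degree_of_card_edgeFinset hG huv) (by omega))
end

section
/- Let $G$ be a graph on $n$ vertices with $m$ edges and minimum degree $\delta(G) \geq 1$. Then the spectral radius satisfies $\rho(G) \leq \sqrt{2m - n + 1}$. -/
/-!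
Take an eigenvector `x` of `A = A(G)` for an eigenvalue `μ` and a vertex `i` where `|x i|`
is maximal. Reading `A² x = μ² x` at `i` gives `μ² ≤ ∑_{k ∼ i} deg k`. Every vertex outside
the neighbourhood of `i` other than `i` itself has degree at least `1`, so by the handshake lemma
`∑_{k ∼ i} deg k ≤ 2m - deg i - (n - 1 - deg i) = 2m - n + 1`.
-/

open SimpleGraph

attribute [local instance] Classical.propDecidable

noncomputable def specRad {V : Type*} [Fintype V] (G : SimpleGraph V) : ℝ :=
  sSup {μ : ℝ | Module.End.HasEigenvalue (Matrix.toLin' (G.adjMatrix ℝ)) μ}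

open scoped Matrix

namespace SimpleGraph

variable {V : Type*} [Fintype V] (G : SimpleGraph V) [DecidableRel G.Adj]

theorem adjMatrix_mulVec_adjMatrix_mulVec_apply (x : V → ℝ) (i : V) :
    (G.adjMatrix ℝ *ᵥ (G.adjMatrix ℝ *ᵥ x)) i =
      ∑ k ∈ G.neighborFinset i, ∑ j ∈ G.neighborFinset k, x j := by
  simp

theorem abs_adjMatrix_mulVec_adjMatrix_mulVec_apply_le {x : V → ℝ} {M : ℝ}
    (hM : ∀ j, |x j| ≤ M) (i : V) :
    |(G.adjMatrix ℝ *ᵥ (G.adjMatrix ℝ *ᵥ x)) i| ≤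
      (∑ k ∈ G.neighborFinset i, (G.degree k : ℝ)) * M := by
  rw [adjMatrix_mulVec_adjMatrix_mulVec_apply, Finset.sum_mul]
  refine (Finset.abs_sum_le_sum_abs _ _).trans (Finset.sum_le_sum fun k _ => ?_)
  calc |∑ j ∈ G.neighborFinset k, x j| ≤ ∑ j ∈ G.neighborFinset k, |x j| :=
        Finset.abs_sum_le_sum_abs _ _
    _ ≤ ∑ _j ∈ G.neighborFinset k, M := Finset.sum_le_sum fun j _ => hM j
    _ = G.degree k * M := by rw [Finset.sum_const, card_neighborFinset_eq_degree, nsmul_eq_mul]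

theorem exists_sq_le_sum_degree_of_hasEigenvalue {μ : ℝ}
    (hμ : Module.End.HasEigenvalue (Matrix.toLin' (G.adjMatrix ℝ)) μ) :
    ∃ i, μ ^ 2 ≤ ∑ k ∈ G.neighborFinset i, (G.degree k : ℝ) := by
  obtain ⟨x, hx⟩ := hμ.exists_hasEigenvector
  have hAx : G.adjMatrix ℝ *ᵥ x = μ • x := by
    rw [← Matrix.toLin'_apply]; exact hx.apply_eq_smul
  have hA2x : G.adjMatrix ℝ *ᵥ (G.adjMatrix ℝ *ᵥ x) = μ ^ 2 • x := by
    rw [hAx, Matrix.mulVec_smul, hAx, smul_smul, sq]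
  obtain ⟨j, hj⟩ := Function.ne_iff.1 hx.2
  obtain ⟨i, -, hi⟩ := Finset.univ.exists_max_image (fun j => |x j|) ⟨j, Finset.mem_univ j⟩
  have hxi : 0 < |x i| := (abs_pos.2 hj).trans_le (hi j (Finset.mem_univ j))
  refine ⟨i, le_of_mul_le_mul_right ?_ hxi⟩
  calc μ ^ 2 * |x i| = |(G.adjMatrix ℝ *ᵥ (G.adjMatrix ℝ *ᵥ x)) i| := by
        rw [hA2x, Pi.smul_apply, smul_eq_mul, abs_mul, abs_of_nonneg (sq_nonneg μ)]
    _ ≤ _ := G.abs_adjMatrix_mulVec_adjMatrix_mulVec_apply_le (hi · (Finset.mem_univ _)) i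

theorem sum_degree_neighborFinset_add_card_le [DecidableEq V] (hδ : 1 ≤ G.minDegree) (i : V) :
    ∑ k ∈ G.neighborFinset i, G.degree k + Fintype.card V ≤ 2 * G.edgeFinset.card + 1 := by
  set S := (Finset.univ \ G.neighborFinset i).erase i with hS_def
  have hi : i ∈ Finset.univ \ G.neighborFinset i := by simp
  have hsplit : G.degree i + ∑ k ∈ S, G.degree k + ∑ k ∈ G.neighborFinset i, G.degree k =
      2 * G.edgeFinset.card := by
    rw [hS_def, Finset.add_sum_erase _ (fun k => G.degree k) hi,
      Finset.sum_sdiff (Finset.subset_univ _), sum_degrees_eq_twice_card_edges]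
  have hS : S.card ≤ ∑ k ∈ S, G.degree k := by
    simpa using Finset.sum_le_sum fun k (_ : k ∈ S) => hδ.trans (G.minDegree_le_degree k)
  have hcardS : S.card = Fintype.card V - G.degree i - 1 := by
    rw [Finset.card_erase_of_mem hi, Finset.card_sdiff_of_subset (Finset.subset_univ _),
      card_neighborFinset_eq_degree, Finset.card_univ]
  have := G.degree_lt_card_verts i
  omega

end SimpleGraph

/-- Hong's inequality: if `δ(G) ≥ 1`, then `ρ(G) ≤ √(2m - n + 1)`. -/
theorem hong_inequality {V : Type*} [Fintype V] (G : SimpleGraph V)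
    (hδ : 1 ≤ G.minDegree) :
    specRad G ≤ Real.sqrt (2 * (G.edgeFinset.card : ℝ) - (Fintype.card V : ℝ) + 1) := by
  refine Real.sSup_le (fun μ hμ => ?_) (Real.sqrt_nonneg _)
  obtain ⟨i, hi⟩ := G.exists_sq_le_sum_degree_of_hasEigenvalue hμ
  have hcount : (∑ k ∈ G.neighborFinset i, (G.degree k : ℝ)) + Fintype.card V ≤
      2 * (G.edgeFinset.card : ℝ) + 1 := by
    exact_mod_cast G.sum_degree_neighborFinset_add_card_le hδ i
  calc μ ≤ |μ| := le_abs_self μ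
    _ = Real.sqrt (μ ^ 2) := (Real.sqrt_sq_eq_abs μ).symm
    _ ≤ _ := Real.sqrt_le_sqrt (by linarith)
end

section
/- Let $G$ be a graph with $m$ edges. If $\rho(G) > \sqrt{m}$, then $G$ contains a triangle. -/
/-!
If `G` is triangle-free, the neighbours of a vertex `v` are pairwise non-adjacent, so their
incidence sets are pairwise disjoint and `∑_{u ~ v} deg u ≤ m`. This sum is the `v`-th row sum of
the nonnegative matrix `A²`, and by Gershgorin's theorem the eigenvalue `μ²` of `A²` is bounded by
some row sum. Hence `μ² ≤ m` for every eigenvalue `μ` of `A`, i.e. `ρ(G) ≤ √m`.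
-/

open SimpleGraph

attribute [local instance] Classical.propDecidable

open Finset

theorem Matrix.exists_norm_le_sum_norm_row_of_hasEigenvalue {K n : Type*} [NormedField K]
    [Fintype n] [DecidableEq n] {A : Matrix n n K} {μ : K}
    (hμ : Module.End.HasEigenvalue (Matrix.toLin' A) μ) : ∃ k, ‖μ‖ ≤ ∑ j, ‖A k j‖ := by
  obtain ⟨k, hk⟩ := eigenvalue_mem_ball hμ
  refine ⟨k, ?_⟩
  rw [← add_sum_erase _ _ (mem_univ k)]
  calc ‖μ‖ ≤ ‖A k k‖ + ‖μ - A k k‖ := norm_le_norm_add_norm_sub' μ (A k k)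
    _ ≤ _ := by gcongr; exact mem_closedBall_iff_norm.1 hk

namespace SimpleGraph

variable {V : Type*} [Fintype V] (G : SimpleGraph V) [DecidableRel G.Adj]

theorem sum_adjMatrix_mul_self_apply {α : Type*} [NonAssocSemiring α] (v : V) :
    ∑ w, (G.adjMatrix α * G.adjMatrix α) v w = ∑ u ∈ G.neighborFinset v, (G.degree u : α) := by
  simp_rw [adjMatrix_mul_apply]
  rw [sum_comm]
  refine sum_congr rfl fun u _ => ?_
  simp [adjMatrix_apply, ← card_neighborFinset_eq_degree, neighborFinset_eq_filter]

variable {G}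

theorem CliqueFree.sum_degree_neighborFinset_le [DecidableEq V] (hG : G.CliqueFree 3) (v : V) :
    ∑ u ∈ G.neighborFinset v, G.degree u ≤ #G.edgeFinset := by
  have hdisj : (G.neighborFinset v : Set V).PairwiseDisjoint fun u => G.incidenceFinset u := by
    intro u hu u' hu' hne
    have hnadj : ¬ G.Adj u u' :=
      isIndepSet_neighborSet_of_triangleFree G hG v (by simpa using hu) (by simpa using hu') hne
    simpa [incidenceFinset, Set.disjoint_iff_inter_eq_empty] using
      G.incidenceSet_inter_incidenceSet_of_not_adj hnadj hne
  calc ∑ u ∈ G.neighborFinset v, G.degree u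
      = #((G.neighborFinset v).biUnion fun u => G.incidenceFinset u) := by
        simp_rw [card_biUnion hdisj, card_incidenceFinset_eq_degree]
    _ ≤ #G.edgeFinset := card_le_card (biUnion_subset.2 fun u _ => G.incidenceFinset_subset u)

theorem CliqueFree.sq_le_card_edgeFinset_of_hasEigenvalue (hG : G.CliqueFree 3) {μ : ℝ}
    (hμ : Module.End.HasEigenvalue (Matrix.toLin' (G.adjMatrix ℝ)) μ) :
    μ ^ 2 ≤ #G.edgeFinset := by
  have hμ2 := hμ.pow 2
  rw [← Matrix.toLin'_pow, sq] at hμ2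
  obtain ⟨v, hv⟩ := Matrix.exists_norm_le_sum_norm_row_of_hasEigenvalue hμ2
  have hnonneg : ∀ w, 0 ≤ (G.adjMatrix ℝ * G.adjMatrix ℝ) v w := fun w => by
    rw [adjMatrix_mul_apply]
    exact sum_nonneg fun u _ => by rw [adjMatrix_apply]; split_ifs <;> norm_num
  calc μ ^ 2 ≤ ‖μ ^ 2‖ := Real.le_norm_self _
    _ ≤ ∑ w, (G.adjMatrix ℝ * G.adjMatrix ℝ) v w := by
        simpa only [Real.norm_of_nonneg (hnonneg _)] using hv
    _ = ((∑ u ∈ G.neighborFinset v, G.degree u : ℕ) : ℝ) := by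
        rw [sum_adjMatrix_mul_self_apply]; push_cast; rfl
    _ ≤ #G.edgeFinset := by exact_mod_cast hG.sum_degree_neighborFinset_le v

end SimpleGraph

/-- Nosal's theorem: if `ρ(G) > √m`, then `G` contains a triangle. -/
theorem nosal_triangle {V : Type*} [Fintype V] (G : SimpleGraph V)
    (h : Real.sqrt (G.edgeFinset.card : ℝ) < specRad G) :
    ∃ a b c : V, G.Adj a b ∧ G.Adj b c ∧ G.Adj a c := by
  by_contra hno
  have hG : G.CliqueFree 3 := fun s hs => by
    obtain ⟨a, b, c, hab, hac, hbc, -⟩ := is3Clique_iff.1 hs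
    exact hno ⟨a, b, c, hab, hbc, hac⟩
  refine h.not_ge (Real.sSup_le (fun μ hμ => ?_) (Real.sqrt_nonneg _))
  exact (le_abs_self μ).trans (Real.abs_le_sqrt (hG.sq_le_card_edgeFinset_of_hasEigenvalue hμ))
end

section
/- Let $G$ be any graph (possibly with isolated vertices). Then for every vertex $v$ of $G$, $\rho^2(G) \leq \rho^2(G - v) + 2 d_G(v)$. -/
/-!
Let `x` be an eigenvector of `A(G)` for its top eigenvalue `μ = ρ(G)`, and split
`‖x‖² = t + r` with `t = x_v²`. The eigen-equation at `v`, `μ x_v = ∑_{u ∼ v} x_u`, and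
Cauchy–Schwarz give `μ² t ≤ d(v) r`. Splitting `⟪x, A x⟫ = μ (t + r)` into the quadratic form of
`G - v` at `x|_{V - v}` plus `2 x_v ∑_{u ∼ v} x_u = 2 μ t`, the Rayleigh bound for `G - v` gives
`μ (r - t) ≤ ρ(G - v) r`. Eliminating `t` and `r` from these two inequalities yields the claim.
-/

open SimpleGraph

attribute [local instance] Classical.propDecidable

open Module.End Matrix

namespace LinearMap.IsSymmetric

variable {E : Type*} [NormedAddCommGroup E] [InnerProductSpace ℝ E] [FiniteDimensional ℝ E]
  {T : E →ₗ[ℝ] E}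

theorem hasEigenvalue_sSup [Nontrivial E] (hT : T.IsSymmetric) :
    HasEigenvalue T (sSup {μ | HasEigenvalue T μ}) :=
  Set.Nonempty.csSup_mem ⟨_, hT.hasEigenvalue_iSup_of_finiteDimensional⟩ (finite_hasEigenvalue T)

theorem inner_apply_self_le_sSup_mul (hT : T.IsSymmetric) (x : E) :
    inner ℝ (T x) x ≤ sSup {μ | HasEigenvalue T μ} * ‖x‖ ^ 2 := by
  rcases eq_or_ne x 0 with rfl | hx
  · simp
  have : Nontrivial E := ⟨⟨x, 0, hx⟩⟩
  have hbdd : BddAbove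
      (Set.range fun y : {y : E // y ≠ 0} ↦ inner ℝ (T y) (y : E) / ‖(y : E)‖ ^ 2) :=
    ⟨‖T.toContinuousLinearMap‖, by
      rintro _ ⟨y, rfl⟩
      exact (le_abs_self _).trans (T.toContinuousLinearMap.rayleighQuotient_le_norm y)⟩
  have hx2 : 0 < ‖x‖ ^ 2 := by positivity
  calc inner ℝ (T x) x = inner ℝ (T x) x / ‖x‖ ^ 2 * ‖x‖ ^ 2 := by field_simp
    _ ≤ sSup {μ | HasEigenvalue T μ} * ‖x‖ ^ 2 := by
      gcongr
      exact (le_ciSup hbdd ⟨x, hx⟩).trans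
        (le_csSup (finite_hasEigenvalue T).bddAbove hT.hasEigenvalue_iSup_of_finiteDimensional)

end LinearMap.IsSymmetric

namespace Matrix

variable {n : Type*} [Fintype n] [DecidableEq n] {A : Matrix n n ℝ}

theorem hasEigenvalue_toLpLin_iff (p : ENNReal) {μ : ℝ} :
    HasEigenvalue (toLpLin p p A) μ ↔ HasEigenvalue (toLin' A) μ := by
  rw [hasEigenvalue_iff_mem_spectrum, hasEigenvalue_iff_mem_spectrum, spectrum_toLpLin,
    spectrum_toLin']

theorem IsHermitian.hasEigenvalue_sSup [Nonempty n] (hA : A.IsHermitian) :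
    HasEigenvalue (toLin' A) (sSup {μ | HasEigenvalue (toLin' A) μ}) := by
  simpa only [hasEigenvalue_toLpLin_iff] using
    (isSymmetric_toEuclideanLin_iff.mpr hA).hasEigenvalue_sSup

theorem IsHermitian.dotProduct_mulVec_le_sSup_mul (hA : A.IsHermitian) (x : n → ℝ) :
    x ⬝ᵥ (A *ᵥ x) ≤ sSup {μ | HasEigenvalue (toLin' A) μ} * (x ⬝ᵥ x) := by
  have := (isSymmetric_toEuclideanLin_iff.mpr hA).inner_apply_self_le_sSup_mul (WithLp.toLp 2 x)
  simpa only [hasEigenvalue_toLpLin_iff, EuclideanSpace.inner_eq_star_dotProduct,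
    ← real_inner_self_eq_norm_sq, toLpLin_toLp, toLin'_apply, star_trivial, dotProduct_comm]
    using this

end Matrix

/-- `Fintype.sum_eq_add_sum_subtype_ne` with the `Fintype` instance of the set `{w | w ≠ v}` (the
vertex type of `G - v`), which `rw` does not identify with that of the subtype. -/
theorem Fintype.sum_eq_add_sum_setOf_ne {V M : Type*} [Fintype V] [AddCommMonoid M] (f : V → M)
    (v : V) : ∑ w, f w = f v + ∑ w : ({w | w ≠ v} : Set V), f w :=
  Fintype.sum_eq_add_sum_subtype_ne f v

namespace SimpleGraph

variable {V : Type*} [Fintype V] (G : SimpleGraph V) [DecidableRel G.Adj]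

theorem specRad_eq_sSup :
    specRad G = sSup {μ | HasEigenvalue (toLin' (G.adjMatrix ℝ)) μ} := by
  rw [specRad]
  congr!

theorem hasEigenvalue_specRad [Nonempty V] :
    HasEigenvalue (toLin' (G.adjMatrix ℝ)) (specRad G) :=
  G.specRad_eq_sSup ▸ (G.isHermitian_adjMatrix ℝ).hasEigenvalue_sSup

theorem dotProduct_adjMatrix_mulVec_le (x : V → ℝ) :
    x ⬝ᵥ (G.adjMatrix ℝ *ᵥ x) ≤ specRad G * (x ⬝ᵥ x) :=
  G.specRad_eq_sSup ▸ (G.isHermitian_adjMatrix ℝ).dotProduct_mulVec_le_sSup_mul x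

theorem specRad_nonneg : 0 ≤ specRad G := by
  rcases isEmpty_or_nonempty V with _ | ⟨⟨w⟩⟩
  · have : {μ | HasEigenvalue (toLin' (G.adjMatrix ℝ)) μ} = ∅ :=
      Set.eq_empty_of_forall_notMem fun _ hμ ↦
        hμ.exists_hasEigenvector.elim fun _ hx ↦ hx.2 (Subsingleton.elim _ _)
    rw [specRad_eq_sSup, this, Real.sSup_empty]
  · simpa using G.dotProduct_adjMatrix_mulVec_le (Pi.single w 1)

theorem sq_sum_neighborFinset_le (x : V → ℝ) (v : V) :
    (∑ u ∈ G.neighborFinset v, x u) ^ 2 ≤ G.degree v * ∑ w : ({w | w ≠ v} : Set V), x w ^ 2 := by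
  calc (∑ u ∈ G.neighborFinset v, x u) ^ 2 ≤ G.degree v * ∑ u ∈ G.neighborFinset v, x u ^ 2 :=
        sq_sum_le_card_mul_sum_sq
    _ ≤ G.degree v * ∑ w : ({w | w ≠ v} : Set V), x w ^ 2 := by
      rw [← Finset.sum_subtype (Finset.univ.erase v) (by simp) fun w ↦ x w ^ 2]
      have hsub : G.neighborFinset v ⊆ Finset.univ.erase v := fun u hu ↦
        Finset.mem_erase.2 ⟨(G.ne_of_adj ((G.mem_neighborFinset v u).1 hu)).symm, Finset.mem_univ u⟩
      gcongr

omit [Fintype V] in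
theorem adjMatrix_induce_apply {R : Type*} [Zero R] [One R] {s : Set V} (a b : s) :
    (G.induce s).adjMatrix R a b = G.adjMatrix R a b := by
  simp [adjMatrix_apply]

variable {R : Type*} [CommSemiring R]

theorem adjMatrix_mulVec_apply_of_ne (x : V → R) {v : V} (a : ({w | w ≠ v} : Set V)) :
    (G.adjMatrix R *ᵥ x) a =
      ((G.induce {w | w ≠ v}).adjMatrix R *ᵥ (x ∘ (↑))) a + G.adjMatrix R a v * x v := by
  simp only [mulVec, dotProduct, adjMatrix_induce_apply, Function.comp_apply]
  rw [Fintype.sum_eq_add_sum_setOf_ne _ v, add_comm]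

theorem sum_mul_adjMatrix_apply_ne (x : V → R) (v : V) :
    ∑ a : ({w | w ≠ v} : Set V), x a * G.adjMatrix R a v = (G.adjMatrix R *ᵥ x) v := by
  rw [mulVec, dotProduct, Fintype.sum_eq_add_sum_setOf_ne _ v]
  simp [adj_comm, mul_comm]

theorem dotProduct_adjMatrix_mulVec_eq (x : V → R) (v : V) :
    x ⬝ᵥ (G.adjMatrix R *ᵥ x) =
      (x ∘ (↑)) ⬝ᵥ ((G.induce {w | w ≠ v}).adjMatrix R *ᵥ (x ∘ (↑))) +
        2 * x v * ∑ u ∈ G.neighborFinset v, x u := by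
  rw [dotProduct, Fintype.sum_eq_add_sum_setOf_ne _ v]
  simp only [adjMatrix_mulVec_apply_of_ne, mul_add, Finset.sum_add_distrib, ← mul_assoc,
    ← Finset.sum_mul, sum_mul_adjMatrix_apply_ne]
  rw [dotProduct, adjMatrix_mulVec_apply]
  simp only [Function.comp_apply]
  ring

end SimpleGraph

/-- The case `t < r` rests on the identity
`(ρ² + 2d - μ²) r² = ((ρr)² - (μ(r - t))²) + (2r - t)(dr - μ²t) + dtr`. -/
theorem sq_le_sq_add_two_mul_of_le {μ ρ d t r : ℝ} (hμ : 0 ≤ μ) (hd : 0 ≤ d) (ht : 0 ≤ t)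
    (hr : 0 ≤ r) (htr : 0 < t + r) (h₁ : μ ^ 2 * t ≤ d * r) (h₂ : μ * (r - t) ≤ ρ * r) :
    μ ^ 2 ≤ ρ ^ 2 + 2 * d := by
  rcases le_or_gt r t with hrt | htr'
  · nlinarith
  · have hsq : (μ * (r - t)) ^ 2 ≤ (ρ * r) ^ 2 := pow_le_pow_left₀ (by nlinarith) h₂ 2
    have key : 0 ≤ (ρ ^ 2 + 2 * d - μ ^ 2) * r ^ 2 := by
      nlinarith [mul_nonneg (by linarith : 0 ≤ 2 * r - t) (by linarith : 0 ≤ d * r - μ ^ 2 * t),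
        mul_nonneg (mul_nonneg hd ht) hr]
    nlinarith [pow_pos (ht.trans_lt htr') 2]

/-- For any graph `G` and any vertex `v`, `ρ²(G) ≤ ρ²(G - v) + 2 d(v)`. -/
theorem specRad_sq_delete_vertex {V : Type*} [Fintype V] (G : SimpleGraph V) (v : V) :
    specRad G ^ 2 ≤ specRad (G.induce {w | w ≠ v}) ^ 2 + 2 * (G.degree v : ℝ) := by
  have : Nonempty V := ⟨v⟩
  obtain ⟨x, hx⟩ := (hasEigenvalue_specRad G).exists_hasEigenvector
  have hAx : G.adjMatrix ℝ *ᵥ x = specRad G • x := by simpa using hx.apply_eq_smul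
  have hrow : specRad G * x v = ∑ u ∈ G.neighborFinset v, x u := by
    simpa using (congrFun hAx v).symm
  have hquad := G.dotProduct_adjMatrix_mulVec_eq x v
  have hrayleigh := (G.induce {w | w ≠ v}).dotProduct_adjMatrix_mulVec_le (x ∘ (↑))
  have hnorm : x ⬝ᵥ x = x v ^ 2 + ∑ w : ({w | w ≠ v} : Set V), x w ^ 2 := by
    simp only [dotProduct, Fintype.sum_eq_add_sum_setOf_ne _ v, sq]
  have hrestrict : (x ∘ ((↑) : ({w | w ≠ v} : Set V) → V)) ⬝ᵥ (x ∘ (↑)) =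
      ∑ w : ({w | w ≠ v} : Set V), x w ^ 2 := by
    simp only [dotProduct, Function.comp_apply, sq]
  rw [hrestrict] at hrayleigh
  rw [hAx, dotProduct_smul, smul_eq_mul, hnorm, ← hrow] at hquad
  have hCS := G.sq_sum_neighborFinset_le x v
  rw [← hrow, mul_pow] at hCS
  have hpos : 0 < x v ^ 2 + ∑ w : ({w | w ≠ v} : Set V), x w ^ 2 := by
    rw [← hnorm]
    exact (Finset.sum_nonneg fun i _ ↦ mul_self_nonneg (x i)).lt_of_ne'
      (dotProduct_self_eq_zero.not.mpr hx.2)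
  exact sq_le_sq_add_two_mul_of_le (specRad_nonneg G) (Nat.cast_nonneg _) (sq_nonneg _)
    (Finset.sum_nonneg fun _ _ ↦ sq_nonneg _) hpos hCS (by linear_combination hrayleigh + hquad)
end
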